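/- Let X and Y be metric spaces, P : X → Y a submetry, and g : Y → ℝ a locally Lipschitz function. Define the ascending slope of a function f : Z → ℝ on a metric space Z at a point z as |∇⁺f|(z) = Filter.limsup (fun w => max (f w − f z) 0 / dist w z) (𝓝[≠] z), the limsup over the punctured neighborhood filter of z. Then for every x ∈ X, the ascending slope of g ∘ P at x equals the ascending slope of g at P x. -/

import Mathlib

/-!
A submetry `P` is `1`-Lipschitz, so the difference quotients of `g ∘ P` at `x` are bounded by
those of `g` at `P x`, which gives one inequality between the slopes. Conversely, every point
`v` near `P x` lifts to a point `w` near `x` with `dist w x` at most `λ * dist v (P x)` for any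
`λ > 1`; hence each difference quotient of `g` at `P x` is at most `λ` times one of `g ∘ P`
at `x`, and letting `λ → 1` gives the other inequality. Local Lipschitz continuity keeps the
quotients bounded, so that the real-valued `limsup`s are not junk values.
-/

open Filter Topology

/-- A map `P : X → Y` between metric spaces is a submetry if it maps every open
ball onto the open ball of the same radius around the image of the center. -/
def IsSubmetry {X Y : Type*} [MetricSpace X] [MetricSpace Y] (P : X → Y) : Prop :=
  ∀ (x : X) (r : ℝ), 0 < r → P '' Metric.ball x r = Metric.ball (P x) r

/-- The ascending slope `|∇⁺ f|(z)` of a real-valued function on a metric space. -/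
noncomputable def ascendingSlope {Z : Type*} [MetricSpace Z] (f : Z → ℝ) (z : Z) : ℝ :=
  Filter.limsup (fun w => max (f w - f z) 0 / dist w z) (𝓝[≠] z)

namespace Real

variable {α : Type*} {u : α → ℝ} {l : Filter α}

theorem limsup_nonneg (hu : ∀ x, 0 ≤ u x) : 0 ≤ limsup u l := by
  rcases l.eq_or_neBot with rfl | _
  · simp [limsup, limsSup]
  by_cases hb : IsBoundedUnder (· ≤ ·) l u
  · exact le_limsup_of_frequently_le (.of_forall hu) hb
  · rw [limsup_of_not_isBoundedUnder hb]

theorem limsup_le_of_forall_gt {a : ℝ} (ha : 0 ≤ a) (h : ∀ b > a, ∀ᶠ x in l, u x < b) :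
    limsup u l ≤ a := by
  by_cases hc : IsCoboundedUnder (· ≤ ·) l u
  · exact le_of_forall_gt_imp_ge_of_dense fun b hb =>
      limsup_le_of_le hc ((h b hb).mono fun _ => le_of_lt)
  · rwa [limsup_of_not_isCoboundedUnder hc]

end Real

section Slope

variable {X Y Z : Type*} [MetricSpace X] [MetricSpace Y] [MetricSpace Z]

noncomputable def ascentQuotient (f : Z → ℝ) (z w : Z) : ℝ :=
  max (f w - f z) 0 / dist w z

theorem ascentQuotient_nonneg (f : Z → ℝ) (z w : Z) : 0 ≤ ascentQuotient f z w :=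
  div_nonneg (le_max_right _ _) dist_nonneg

@[simp]
theorem ascentQuotient_self (f : Z → ℝ) (z : Z) : ascentQuotient f z z = 0 := by
  simp [ascentQuotient]

theorem ascendingSlope_nonneg (f : Z → ℝ) (z : Z) : 0 ≤ ascendingSlope f z :=
  Real.limsup_nonneg (ascentQuotient_nonneg f z)

theorem ascendingSlope_le_of_forall_gt {f : Z → ℝ} {z : Z} {a : ℝ} (ha : 0 ≤ a)
    (h : ∀ b > a, ∀ᶠ w in 𝓝[≠] z, ascentQuotient f z w < b) : ascendingSlope f z ≤ a :=
  Real.limsup_le_of_forall_gt ha h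

theorem LocallyLipschitz.isBoundedUnder_ascentQuotient {f : Z → ℝ} (hf : LocallyLipschitz f)
    (z : Z) : IsBoundedUnder (· ≤ ·) (𝓝[≠] z) (ascentQuotient f z) := by
  obtain ⟨K, t, ht, hK⟩ := hf z
  refine ⟨K, eventually_map.2 (eventually_nhdsWithin_of_eventually_nhds ?_)⟩
  filter_upwards [ht] with w hw
  refine div_le_of_le_mul₀ dist_nonneg K.coe_nonneg (max_le ?_ (by positivity))
  calc f w - f z ≤ dist (f w) (f z) := (le_abs_self _).trans (Real.dist_eq _ _).ge
    _ ≤ K * dist w z := hK.dist_le_mul w hw z (mem_of_mem_nhds ht)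

theorem LocallyLipschitz.eventually_ascentQuotient_lt {f : Z → ℝ} (hf : LocallyLipschitz f)
    {z : Z} {b : ℝ} (hb : ascendingSlope f z < b) :
    ∀ᶠ w in 𝓝[≠] z, ascentQuotient f z w < b :=
  eventually_lt_of_limsup_lt hb (hf.isBoundedUnder_ascentQuotient z)

theorem ascentQuotient_comp_le {P : X → Y} (hP : LipschitzWith 1 P) (g : Y → ℝ) (x w : X) :
    ascentQuotient (g ∘ P) x w ≤ ascentQuotient g (P x) (P w) := by
  rcases (dist_nonneg : 0 ≤ dist (P w) (P x)).eq_or_lt with hd | hd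
  · simp [ascentQuotient, dist_eq_zero.1 hd.symm]
  · exact div_le_div_of_nonneg_left (le_max_right _ _) hd (by simpa using hP.dist_le_mul w x)

theorem ascentQuotient_le_mul_comp {P : X → Y} (g : Y → ℝ) {x w : X} {c : ℝ}
    (hw : 0 < dist w x) (hc : dist w x ≤ c * dist (P w) (P x)) :
    ascentQuotient g (P x) (P w) ≤ c * ascentQuotient (g ∘ P) x w := by
  have hcd : 0 < c * dist (P w) (P x) := hw.trans_le hc
  have hc0 : 0 < c := pos_of_mul_pos_left hcd dist_nonneg
  calc ascentQuotient g (P x) (P w)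
      = c * (max (g (P w) - g (P x)) 0 / (c * dist (P w) (P x))) := by
        rw [ascentQuotient, mul_div_assoc', mul_div_mul_left _ _ hc0.ne']
    _ ≤ c * ascentQuotient (g ∘ P) x w := by
        gcongr
        exact div_le_div_of_nonneg_left (le_max_right _ _) hw hc

theorem ascendingSlope_comp_le {P : X → Y} (hP : LipschitzWith 1 P) {g : Y → ℝ}
    (hg : LocallyLipschitz g) (x : X) : ascendingSlope (g ∘ P) x ≤ ascendingSlope g (P x) := by
  refine ascendingSlope_le_of_forall_gt (ascendingSlope_nonneg g (P x)) fun b hb => ?_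
  have hnhds : ∀ᶠ v in 𝓝 (P x), ascentQuotient g (P x) v < b := by
    rw [← nhdsNE_sup_pure, eventually_sup, eventually_pure, ascentQuotient_self]
    exact ⟨hg.eventually_ascentQuotient_lt hb, (ascendingSlope_nonneg g (P x)).trans_lt hb⟩
  filter_upwards [nhdsWithin_le_nhds (hP.continuous.continuousAt.eventually hnhds)] with w hw
  exact (ascentQuotient_comp_le hP g x w).trans_lt hw

end Slope

namespace IsSubmetry

variable {X Y : Type*} [MetricSpace X] [MetricSpace Y] {P : X → Y}

theorem dist_le (hP : IsSubmetry P) (w z : X) : dist (P w) (P z) ≤ dist w z := by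
  by_contra! h
  have : P w ∈ Metric.ball (P z) (dist (P w) (P z)) := by
    rw [← hP z _ (dist_nonneg.trans_lt h)]
    exact Set.mem_image_of_mem P (Metric.mem_ball.2 h)
  exact lt_irrefl _ (Metric.mem_ball.1 this)

theorem lipschitzWith (hP : IsSubmetry P) : LipschitzWith 1 P :=
  .of_dist_le_mul fun w z => by simpa using hP.dist_le w z

theorem exists_eq_of_dist_lt (hP : IsSubmetry P) {x : X} {v : Y} {r : ℝ}
    (h : dist v (P x) < r) : ∃ w, dist w x < r ∧ P w = v := by
  rw [← Metric.mem_ball, ← hP x r (dist_nonneg.trans_lt h)] at h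
  exact h

theorem ascendingSlope_le_comp (hP : IsSubmetry P) {g : Y → ℝ}
    (hgP : LocallyLipschitz (g ∘ P)) (x : X) :
    ascendingSlope g (P x) ≤ ascendingSlope (g ∘ P) x := by
  refine ascendingSlope_le_of_forall_gt (ascendingSlope_nonneg _ _) fun c hc => ?_
  obtain ⟨b, hLb, hbc⟩ := exists_between hc
  have hb : 0 < b := (ascendingSlope_nonneg _ _).trans_lt hLb
  have hc0 : 0 < c := hb.trans hbc
  obtain ⟨δ, hδ, hquot⟩ := Metric.eventually_nhds_iff.1
    (eventually_nhdsWithin_iff.1 (hgP.eventually_ascentQuotient_lt hLb))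
  rw [eventually_nhdsWithin_iff, Metric.eventually_nhds_iff]
  refine ⟨δ * b / c, by positivity, fun {v} hv hvx => ?_⟩
  have hd : 0 < dist v (P x) := dist_pos.2 hvx
  obtain ⟨w, hw, rfl⟩ := hP.exists_eq_of_dist_lt
    (lt_mul_left hd ((one_lt_div hb).2 hbc) : dist v (P x) < c / b * dist v (P x))
  have hwx : w ≠ x := by rintro rfl; exact hvx rfl
  have hwδ : dist w x < δ := by
    refine hw.trans ?_
    rw [lt_div_iff₀ hc0] at hv
    rw [div_mul_eq_mul_div, div_lt_iff₀ hb]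
    linarith
  calc ascentQuotient g (P x) (P w)
      ≤ c / b * ascentQuotient (g ∘ P) x w :=
        ascentQuotient_le_mul_comp g (dist_pos.2 hwx) hw.le
    _ < c / b * b := mul_lt_mul_of_pos_left (hquot hwδ hwx) (div_pos hc0 hb)
    _ = c := div_mul_cancel₀ c hb.ne'

end IsSubmetry

/-- A submetry preserves ascending slopes of locally Lipschitz functions:
the slope of `g ∘ P` at `x` equals the slope of `g` at `P x`. -/
theorem submetry_ascendingSlope_comp {X Y : Type*} [MetricSpace X] [MetricSpace Y]
    (P : X → Y) (hP : IsSubmetry P) (g : Y → ℝ) (hg : LocallyLipschitz g) (x : X) :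
    ascendingSlope (g ∘ P) x = ascendingSlope g (P x) :=
  (ascendingSlope_comp_le hP.lipschitzWith hg x).antisymm
    (hP.ascendingSlope_le_comp (hg.comp hP.lipschitzWith.locallyLipschitz) x)
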